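/- Consider the first-order Sigma-Delta quantization with b-bit alphabet A = {a/(2^b−1) : a = ±1, ±3, …, ±(2^b−1)} applied to a vector z ∈ [−1,1]^m, with random initialization u_0 ∼ U[−1/(2^b−1), 1/(2^b−1)]: q_{k+1} = Q_MSQ(z_{k+1} + u_k), u_{k+1} = u_k + z_{k+1} − q_{k+1}. Then for every k = 0, 1, …, m, conditionally on z, the state variable u_k is uniformly distributed on [−1/(2^b−1), 1/(2^b−1)]. -/

import Mathlib

/-!
Write `δ = 1 / (2^b - 1)`. The alphabet is the set of odd multiples of `δ` in `[-1, 1]`, so its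
points are `2δ` apart. For `|z| ≤ 1` and `|v| ≤ δ`, the nearest alphabet point to `z + v` is the
odd multiple of `δ` within distance `δ` of it (ties occur only on a null set), so one step of the
recursion sends `v` to the representative of `v + z - δ` modulo `2δ` in `(-δ, δ]`. This map is a
rotation of the circle `ℝ / 2δℤ` read on a fundamental domain, so it preserves Lebesgue measure
on `(-δ, δ]`, and the claim follows by induction on `k`.
-/


open MeasureTheory ProbabilityTheory

/-- The b-bit quantization alphabet A = {a/(2^b−1) : a = ±1, ±3, …, ±(2^b−1)}. -/
def alphabetB (b : ℕ) : Set ℝ :=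
  {x | ∃ j : Fin (2 ^ b), x = (2 * (j : ℝ) + 1 - 2 ^ b) / (2 ^ b - 1)}

/-- The uniform distribution on `[−1/(2^b−1), 1/(2^b−1)]`. -/
noncomputable def uniformCell (b : ℕ) : Measure ℝ :=
  (ENNReal.ofReal (2 / ((2 : ℝ) ^ b - 1)))⁻¹ •
    volume.restrict (Set.Icc (-(1 / ((2 : ℝ) ^ b - 1))) (1 / ((2 : ℝ) ^ b - 1)))

open Set

theorem measurePreserving_toIocMod_add {T : ℝ} (hT : 0 < T) (a c : ℝ) :
    MeasurePreserving (fun v => toIocMod hT a (v + c))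
      (volume.restrict (Ioc a (a + T))) (volume.restrict (Ioc a (a + T))) := by
  have : Fact (0 < T) := ⟨hT⟩
  convert (measurePreserving_subtype_coe measurableSet_Ioc).comp
    ((AddCircle.measurePreserving_equivIoc T (a := a)).comp
      ((measurePreserving_add_right volume (c : AddCircle T)).comp
        (AddCircle.measurePreserving_mk T a))) using 1
  ext v
  simp [AddCircle.equivIoc, ← QuotientAddGroup.mk_add]

noncomputable def cellRadius (b : ℕ) : ℝ := 1 / ((2 : ℝ) ^ b - 1)

section

variable {b : ℕ}

theorem cellRadius_pos (hb : 1 ≤ b) : 0 < cellRadius b := by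
  have : (1 : ℝ) < 2 ^ b := one_lt_pow₀ one_lt_two (by omega)
  rw [cellRadius]
  exact one_div_pos.2 (by linarith)

theorem two_pow_sub_one_mul_cellRadius (hb : 1 ≤ b) : ((2 : ℝ) ^ b - 1) * cellRadius b = 1 := by
  have : (1 : ℝ) < 2 ^ b := one_lt_pow₀ one_lt_two (by omega)
  rw [cellRadius]
  exact mul_one_div_cancel (by linarith)

theorem mem_alphabetB_iff (hb : 1 ≤ b) {x : ℝ} :
    x ∈ alphabetB b ↔ ∃ n : ℤ, |2 * n + 1| < 2 ^ b ∧ x = (2 * n + 1) * cellRadius b := by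
  obtain ⟨p, hp⟩ : ∃ p : ℕ, 2 ^ b = 2 * p := ⟨2 ^ (b - 1), by rw [← pow_succ']; congr 1; omega⟩
  have hpZ : (2 : ℤ) ^ b = 2 * p := by exact_mod_cast hp
  have hpR : (2 : ℝ) ^ b = 2 * p := by exact_mod_cast hp
  have hp₁ : 1 ≤ p := by have := Nat.one_lt_two_pow (n := b) (by omega); omega
  have hN : (2 : ℝ) * p - 1 ≠ 0 := by
    have : (1 : ℝ) ≤ p := by exact_mod_cast hp₁
    linarith
  simp only [alphabetB, Set.mem_ofPred_eq, cellRadius, hpR, hpZ]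
  constructor
  · rintro ⟨j, rfl⟩
    have hj : (j : ℤ) < 2 * p := by exact_mod_cast (j.isLt.trans_eq hp)
    refine ⟨j - p, abs_lt.2 ⟨by omega, by omega⟩, ?_⟩
    push_cast
    field_simp
    ring
  · rintro ⟨n, hn, rfl⟩
    obtain ⟨hn₁, hn₂⟩ := abs_lt.1 hn
    have hj : (((n + p).toNat : ℕ) : ℝ) = n + p := by
      exact_mod_cast Int.toNat_of_nonneg (by omega : 0 ≤ n + p)
    refine ⟨⟨(n + p).toNat, by omega⟩, ?_⟩
    simp only [hj]
    field_simp
    ring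

theorem eq_of_mem_alphabetB_of_abs_sub_lt (hb : 1 ≤ b) {x y : ℝ} (hx : x ∈ alphabetB b)
    (hy : y ∈ alphabetB b) (hxy : |x - y| < 2 * cellRadius b) : x = y := by
  obtain ⟨n, -, rfl⟩ := (mem_alphabetB_iff hb).1 hx
  obtain ⟨m, -, rfl⟩ := (mem_alphabetB_iff hb).1 hy
  have hδ := cellRadius_pos hb
  have hnm : |((n - m : ℤ) : ℝ)| < 1 := by
    rw [show (2 * n + 1) * cellRadius b - (2 * m + 1) * cellRadius b
      = 2 * cellRadius b * (n - m) by ring, abs_mul, abs_of_pos (by positivity)] at hxy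
    push_cast
    exact (mul_lt_iff_lt_one_right (by positivity)).1 hxy
  obtain rfl : n = m := by
    have := abs_lt.1 (show |n - m| < 1 by exact_mod_cast hnm)
    omega
  rfl

theorem eq_of_nearest_of_abs_sub_lt (hb : 1 ≤ b) {y q w : ℝ} (hq : q ∈ alphabetB b)
    (hnear : ∀ w ∈ alphabetB b, |y - q| ≤ |y - w|) (hw : w ∈ alphabetB b)
    (hyw : |y - w| < cellRadius b) : q = w :=
  eq_of_mem_alphabetB_of_abs_sub_lt hb hq hw <| calc
    |q - w| ≤ |q - y| + |y - w| := abs_sub_le q y w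
    _ = |y - q| + |y - w| := by rw [abs_sub_comm]
    _ < 2 * cellRadius b := by linarith [hnear w hw]

theorem sub_nearest_eq_toIocMod (hb : 1 ≤ b) (hδ : 0 < 2 * cellRadius b) {z v q : ℝ}
    (hz : |z| ≤ 1) (hv : |v| ≤ cellRadius b)
    (hr : toIocMod hδ (-cellRadius b) (v + (z - cellRadius b)) ≠ cellRadius b)
    (hq : q ∈ alphabetB b) (hnear : ∀ w ∈ alphabetB b, |z + v - q| ≤ |z + v - w|) :
    v + z - q = toIocMod hδ (-cellRadius b) (v + (z - cellRadius b)) := by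
  set δ := cellRadius b
  set r := toIocMod hδ (-δ) (v + (z - δ))
  set n := toIocDiv hδ (-δ) (v + (z - δ))
  have hr_mem : r ∈ Ioc (-δ) (-δ + 2 * δ) := toIocMod_mem_Ioc hδ _ _
  have hr_lt : |r| < δ := abs_lt.2 ⟨hr_mem.1, lt_of_le_of_ne (by linarith [hr_mem.2]) hr⟩
  have hdiv : v + (z - δ) - r = n * (2 * δ) := by
    rw [← zsmul_eq_mul]; exact self_sub_toIocMod hδ _ _
  have hyw : z + v - (2 * n + 1) * δ = r := by linarith
  have hw : ((2 * n + 1) * δ) ∈ alphabetB b := by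
    refine (mem_alphabetB_iff hb).2 ⟨n, ?_, rfl⟩
    have hδpos := cellRadius_pos hb
    have hw_lt : |(2 * (n : ℝ) + 1)| * δ < (2 ^ b + 1) * δ := calc
      |(2 * (n : ℝ) + 1)| * δ = |z + v - r| := by
        rw [← hyw, sub_sub_cancel, abs_mul, abs_of_pos hδpos]
      _ ≤ |z| + |v| + |r| := (abs_sub _ _).trans (by gcongr; exact abs_add_le _ _)
      _ < (2 ^ b + 1) * δ := by nlinarith [two_pow_sub_one_mul_cellRadius hb]
    have h2n : |2 * n + 1| < 2 ^ b + 1 := by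
      exact_mod_cast lt_of_mul_lt_mul_right hw_lt hδpos.le
    have hp : (2 : ℤ) ^ b = 2 * 2 ^ (b - 1) := by rw [← pow_succ']; congr 1; omega
    have := abs_lt.1 h2n
    exact abs_lt.2 ⟨by omega, by omega⟩
  rw [eq_of_nearest_of_abs_sub_lt hb hq hnear hw (hyw ▸ hr_lt)]
  linarith

theorem uniformCell_eq_smul_restrict_Ioc :
    uniformCell b = (ENNReal.ofReal (2 / ((2 : ℝ) ^ b - 1)))⁻¹ •
      volume.restrict (Ioc (-cellRadius b) (-cellRadius b + 2 * cellRadius b)) := by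
  rw [uniformCell, show -cellRadius b + 2 * cellRadius b = cellRadius b by ring,
    Measure.restrict_congr_set Ioc_ae_eq_Icc]
  rfl

theorem exists_sigmaDelta_step (hb : 1 ≤ b) {z : ℝ} (hz : |z| ≤ 1) :
    ∃ f : ℝ → ℝ, Measurable f ∧ (uniformCell b).map f = uniformCell b ∧
      ∀ᵐ v ∂uniformCell b, ∀ q ∈ alphabetB b,
        (∀ w ∈ alphabetB b, |z + v - q| ≤ |z + v - w|) → v + z - q = f v := by
  have hδ : 0 < 2 * cellRadius b := by linarith [cellRadius_pos hb]
  have hf := measurePreserving_toIocMod_add hδ (-cellRadius b) (z - cellRadius b)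
  rw [uniformCell_eq_smul_restrict_Ioc]
  refine ⟨_, hf.measurable, by rw [Measure.map_smul, hf.map_eq], Measure.ae_smul_measure ?_ _⟩
  have hf_ne : ∀ᵐ v ∂volume.restrict (Ioc (-cellRadius b) (-cellRadius b + 2 * cellRadius b)),
      toIocMod hδ (-cellRadius b) (v + (z - cellRadius b)) ≠ cellRadius b :=
    hf.quasiMeasurePreserving.ae <| ae_restrict_of_ae <|
      measure_eq_zero_iff_ae_notMem.1 (measure_singleton _)
  filter_upwards [ae_restrict_mem measurableSet_Ioc, hf_ne] with v hv hfv q hq hnear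
  exact sub_nearest_eq_toIocMod hb hδ hz (abs_le.2 ⟨hv.1.le, by linarith [hv.2]⟩) hfv hq hnear

end

theorem stmt_12_general
    {Ω : Type*} [MeasureSpace Ω]
    (b m : ℕ) (hb : 1 ≤ b)
    (z : ℕ → ℝ) (hz : ∀ k, 1 ≤ k → k ≤ m → |z k| ≤ 1)
    (u : ℕ → Ω → ℝ) (q : ℕ → Ω → ℝ)
    (humeas : ∀ k, Measurable (u k))
    -- u_0 ~ U[−1/(2^b−1), 1/(2^b−1)]
    (hu0 : Measure.map (u 0) ℙ = uniformCell b)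
    -- q_k = Q_MSQ(z_k + u_{k−1}): nearest alphabet element
    (hqmem : ∀ k, 1 ≤ k → k ≤ m → ∀ a, q k a ∈ alphabetB b)
    (hqnear : ∀ k, 1 ≤ k → k ≤ m → ∀ a, ∀ w ∈ alphabetB b,
      |z k + u (k - 1) a - q k a| ≤ |z k + u (k - 1) a - w|)
    -- u_k = u_{k−1} + z_k − q_k
    (hurec : ∀ k, 1 ≤ k → k ≤ m → ∀ a, u k a = u (k - 1) a + z k - q k a) :
    ∀ k ≤ m, Measure.map (u k) (ℙ : Measure Ω) = uniformCell b := by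
  intro k
  induction k with
  | zero => exact fun _ => hu0
  | succ k ih =>
    intro hk
    have hlaw := ih (by omega)
    obtain ⟨f, hf, hf_map, hf_step⟩ := exists_sigmaDelta_step hb (hz (k + 1) (by omega) hk)
    have hu_succ : u (k + 1) =ᵐ[ℙ] f ∘ u k := by
      filter_upwards [ae_of_ae_map (humeas k).aemeasurable (hlaw ▸ hf_step)] with a ha
      rw [Function.comp_apply, ← ha (q (k + 1) a) (hqmem (k + 1) (by omega) hk a)
        (hqnear (k + 1) (by omega) hk a), hurec (k + 1) (by omega) hk a, Nat.add_sub_cancel]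
    rw [Measure.map_congr hu_succ, ← Measure.map_map hf (humeas k), hlaw, hf_map]

/-- Invariance of the uniform distribution of the state variable under first-order
Sigma-Delta quantization with randomized initialization (Lemma D.1). -/
theorem stmt_12
    {Ω : Type*} [MeasureSpace Ω] [IsProbabilityMeasure (ℙ : Measure Ω)]
    (b m : ℕ) (hb : 1 ≤ b)
    (z : ℕ → ℝ) (hz : ∀ k, 1 ≤ k → k ≤ m → |z k| ≤ 1)
    (u : ℕ → Ω → ℝ) (q : ℕ → Ω → ℝ)
    (humeas : ∀ k, Measurable (u k))
    -- u_0 ~ U[−1/(2^b−1), 1/(2^b−1)]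
    (hu0 : Measure.map (u 0) ℙ = uniformCell b)
    -- q_k = Q_MSQ(z_k + u_{k−1}): nearest alphabet element
    (hqmem : ∀ k, 1 ≤ k → k ≤ m → ∀ a, q k a ∈ alphabetB b)
    (hqnear : ∀ k, 1 ≤ k → k ≤ m → ∀ a, ∀ w ∈ alphabetB b,
      |z k + u (k - 1) a - q k a| ≤ |z k + u (k - 1) a - w|)
    -- u_k = u_{k−1} + z_k − q_k
    (hurec : ∀ k, 1 ≤ k → k ≤ m → ∀ a, u k a = u (k - 1) a + z k - q k a) :
    ∀ k ≤ m, Measure.map (u k) (ℙ : Measure Ω) = uniformCell b :=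
  stmt_12_general b m hb z hz u q humeas hu0 hqmem hqnear hurec
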